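/- For each N ≥ 2 and 1 ≤ j ≤ N, the map ρ_{N,j} defined on the free group on γ'_1,…,γ'_{6N−4} by the explicit transposition assignments of the paper (ρ(γ'_1) = ρ(γ'_{6N−4}) = (1 2); ρ(γ'_{2+6(k−1)}) = ρ(γ'_{3+6(k−1)}) = (2, 3k) and ρ(γ'_{4+6(k−1)}) = ρ(γ'_{5+6(k−1)}) = (3k, 3k+1), ρ(γ'_{6+6(k−1)}) = ρ(γ'_{7+6(k−1)}) = (3k+1, 3k+2) for 1 ≤ k ≤ j−1; and ρ(γ'_{2+6(ℓ−1)}) = ρ(γ'_{3+6(ℓ−1)}) = (3ℓ+1, 3ℓ+2), ρ(γ'_{4+6(ℓ−1)}) = ρ(γ'_{5+6(ℓ−1)}) = (3ℓ, 3ℓ+1), ρ(γ'_{6+6(ℓ−1)}) = ρ(γ'_{7+6(ℓ−1)}) = (2, 3ℓ) for j ≤ ℓ ≤ N−1) has image a transitive subgroup of S_{3N−1}. -/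

import Mathlib

open Fin.NatCast in
/-- The covering monodromy transposition assigned by the paper to the `x`-th branch
point (0-indexed `x`, corresponding to the 1-indexed generator `γ'_{x+1}`) of the
simple branched covering `q_{N,j}`. Letters of `S_{3N−1}` are shifted down by one,
so the paper's letter `ℓ ∈ {1,…,3N−1}` is `ℓ−1 : Fin (3N−1)`; e.g. the paper's
transposition `(1 2)` is `Equiv.swap 0 1`, `(2 3k)` is `Equiv.swap 1 (3k−1)`, etc. -/
def branchPerm (N j : ℕ) [NeZero (3 * N - 1)] (x : Fin (6 * N - 4)) :
    Equiv.Perm (Fin (3 * N - 1)) :=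
  let i := (x : ℕ) + 1
  if i = 1 ∨ i = 6 * N - 4 then
    Equiv.swap ((0 : ℕ) : Fin (3 * N - 1)) ((1 : ℕ) : Fin (3 * N - 1))
  else
    let k := (i - 2) / 6 + 1
    let r := (i - 2) % 6
    if k ≤ j - 1 then
      if r < 2 then Equiv.swap ((1 : ℕ) : Fin (3 * N - 1)) ((3 * k - 1 : ℕ) : Fin (3 * N - 1))
      else if r < 4 then
        Equiv.swap ((3 * k - 1 : ℕ) : Fin (3 * N - 1)) ((3 * k : ℕ) : Fin (3 * N - 1))
      else Equiv.swap ((3 * k : ℕ) : Fin (3 * N - 1)) ((3 * k + 1 : ℕ) : Fin (3 * N - 1))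
    else
      if r < 2 then
        Equiv.swap ((3 * k : ℕ) : Fin (3 * N - 1)) ((3 * k + 1 : ℕ) : Fin (3 * N - 1))
      else if r < 4 then
        Equiv.swap ((3 * k - 1 : ℕ) : Fin (3 * N - 1)) ((3 * k : ℕ) : Fin (3 * N - 1))
      else Equiv.swap ((1 : ℕ) : Fin (3 * N - 1)) ((3 * k - 1 : ℕ) : Fin (3 * N - 1))

/-- The covering monodromy `ρ_{N,j} : F_{6N−4} → S_{3N−1}` of the simple branched
covering `q_{N,j}`, defined on the free group on `γ'_1,…,γ'_{6N−4}` by the explicit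
transposition assignments of the paper. -/
def rhoNj (N j : ℕ) [NeZero (3 * N - 1)] :
    FreeGroup (Fin (6 * N - 4)) →* Equiv.Perm (Fin (3 * N - 1)) :=
  FreeGroup.lift (branchPerm N j)

/-!
Whatever `j` is, the generators of the `k`-th block (`1 ≤ k ≤ N - 1`) are sent to the three
transpositions `(2, 3k)`, `(3k, 3k+1)`, `(3k+1, 3k+2)`, and the first generator to `(1 2)`.
These transpositions form a tree on all `3N - 1` letters through the letter `2`, so the image
contains `(2 m)` for every letter `m`, hence every transposition `(a b) = (2 a)(2 b)(2 a)`.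
-/

open Equiv Fin.NatCast

lemma swap_mem_of_forall_swap_mem {α C : Type*} [DecidableEq α] [SetLike C (Perm α)]
    [SubmonoidClass C (Perm α)] (M : C) (c : α) (h : ∀ x, swap c x ∈ M) (a b : α) : swap a b ∈ M :=
  SubmonoidClass.swap_mem_trans M (swap_comm a c ▸ h a) (h b)

section

variable (N j : ℕ) [NeZero (3 * N - 1)]

lemma branchPerm_mem_range (x : Fin (6 * N - 4)) : branchPerm N j x ∈ (rhoNj N j).range :=
  ⟨FreeGroup.of x, FreeGroup.lift_apply_of⟩

lemma branchPerm_zero (hN : 1 ≤ N) :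
    branchPerm N j ⟨0, by omega⟩ = swap ((0 : ℕ) : Fin (3 * N - 1)) ((1 : ℕ) : Fin (3 * N - 1)) := by
  simp only [branchPerm]
  exact if_pos (Or.inl trivial)

lemma block_swaps_mem_range {k : ℕ} (hk : 1 ≤ k) (hkN : k < N) :
    swap ((1 : ℕ) : Fin (3 * N - 1)) ((3 * k - 1 : ℕ) : Fin (3 * N - 1)) ∈ (rhoNj N j).range ∧
    swap ((3 * k - 1 : ℕ) : Fin (3 * N - 1)) ((3 * k : ℕ) : Fin (3 * N - 1)) ∈ (rhoNj N j).range ∧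
    swap ((3 * k : ℕ) : Fin (3 * N - 1)) ((3 * k + 1 : ℕ) : Fin (3 * N - 1)) ∈
      (rhoNj N j).range := by
  have e₁ : branchPerm N j ⟨6 * k - 5, by omega⟩ =
      if k ≤ j - 1 then swap ((1 : ℕ) : Fin (3 * N - 1)) ((3 * k - 1 : ℕ) : Fin (3 * N - 1))
      else swap ((3 * k : ℕ) : Fin (3 * N - 1)) ((3 * k + 1 : ℕ) : Fin (3 * N - 1)) := by
    simp only [branchPerm]
    rw [if_neg (by omega), show (6 * k - 5 + 1 - 2) / 6 + 1 = k by omega,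
      show (6 * k - 5 + 1 - 2) % 6 = 0 by omega]
    simp
  have e₂ : branchPerm N j ⟨6 * k - 3, by omega⟩ =
      swap ((3 * k - 1 : ℕ) : Fin (3 * N - 1)) ((3 * k : ℕ) : Fin (3 * N - 1)) := by
    simp only [branchPerm]
    rw [if_neg (by omega), show (6 * k - 3 + 1 - 2) / 6 + 1 = k by omega,
      show (6 * k - 3 + 1 - 2) % 6 = 2 by omega]
    simp
  have e₃ : branchPerm N j ⟨6 * k - 1, by omega⟩ =
      if k ≤ j - 1 then swap ((3 * k : ℕ) : Fin (3 * N - 1)) ((3 * k + 1 : ℕ) : Fin (3 * N - 1))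
      else swap ((1 : ℕ) : Fin (3 * N - 1)) ((3 * k - 1 : ℕ) : Fin (3 * N - 1)) := by
    simp only [branchPerm]
    rw [if_neg (by omega), show (6 * k - 1 + 1 - 2) / 6 + 1 = k by omega,
      show (6 * k - 1 + 1 - 2) % 6 = 4 by omega]
    simp
  have m₁ := branchPerm_mem_range N j ⟨6 * k - 5, by omega⟩
  have m₂ := branchPerm_mem_range N j ⟨6 * k - 3, by omega⟩
  have m₃ := branchPerm_mem_range N j ⟨6 * k - 1, by omega⟩
  rw [e₂] at m₂
  split_ifs at e₁ e₃
  · exact ⟨e₁ ▸ m₁, m₂, e₃ ▸ m₃⟩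
  · exact ⟨e₃ ▸ m₃, m₂, e₁ ▸ m₁⟩

lemma swap_one_mem_range {m : ℕ} (hm : m < 3 * N - 1) :
    swap ((1 : ℕ) : Fin (3 * N - 1)) (m : Fin (3 * N - 1)) ∈ (rhoNj N j).range := by
  obtain rfl | rfl | hm₂ : m = 0 ∨ m = 1 ∨ 2 ≤ m := by omega
  · rw [swap_comm, ← branchPerm_zero N j (by omega)]
    exact branchPerm_mem_range N j _
  · rw [swap_self]
    exact one_mem _
  -- the letter `m + 1 ≥ 3` of the paper lies in the block `k = ⌊(m + 1) / 3⌋`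
  obtain ⟨h₁, h₂, h₃⟩ := block_swaps_mem_range N j (k := (m + 1) / 3) (by omega) (by omega)
  have h₁₂ := SubmonoidClass.swap_mem_trans _ h₁ h₂
  obtain hm | hm | hm : m = 3 * ((m + 1) / 3) - 1 ∨ m = 3 * ((m + 1) / 3) ∨
      m = 3 * ((m + 1) / 3) + 1 := by omega
  · rwa [hm]
  · rwa [hm]
  · rw [hm]
    exact SubmonoidClass.swap_mem_trans _ h₁₂ h₃

end

theorem rhoNj_transitive_general (N j : ℕ) [NeZero (3 * N - 1)] :
    ∀ a b : Fin (3 * N - 1), ∃ π ∈ (rhoNj N j).range, π a = b := by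
  have hswap : ∀ x : Fin (3 * N - 1), swap ((1 : ℕ) : Fin (3 * N - 1)) x ∈ (rhoNj N j).range :=
    fun x => Fin.cast_val_eq_self x ▸ swap_one_mem_range N j x.isLt
  exact fun a b => ⟨swap a b, swap_mem_of_forall_swap_mem _ _ hswap a b, swap_apply_left a b⟩

/-- the image of the covering monodromy `ρ_{N,j}` is a transitive
subgroup of `S_{3N−1}` (connectedness of the cover). -/
theorem rhoNj_transitive (N j : ℕ) [NeZero (3 * N - 1)]
    (hN : 2 ≤ N) (h1 : 1 ≤ j) (hj : j ≤ N) :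
    ∀ a b : Fin (3 * N - 1), ∃ π ∈ (rhoNj N j).range, π a = b :=
  rhoNj_transitive_general N j
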